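/- Let T be a tree with |T| = n ≥ 1, let ε > 0, V : {1,…,n} → ℂ and F : {1,…,n+1} → ℝ. Define Ω_T(V,F) ∈ ℂ by recursion on T: for T = T₁ ∨ T₂ with k := |T₁|, Ω_T(V,F) := i · L · V(k+1) · R / ( i F(1) − i F(n+1) + nε ), where L := −1 if T₁ = | and otherwise L := Ω_{T₁}( (V(1),…,V(k)), (F(1),…,F(k+1)) ), and R := 1 if T₂ = | and otherwise R := Ω_{T₂}( (V(k+2),…,V(n)), (F(k+2),…,F(n+1)) ). Let γ := γ_T be the lexicographically smallest element of S_T, and for 1 ≤ j ≤ n set l(j) := min{ p ≤ j : γ(m) ≥ γ(j) for all m with p ≤ m ≤ j } and r(j) := max{ p ≥ j : γ(m) ≥ γ(j) for all m with j ≤ m ≤ p }. Let d(T) be the number of right-pointing leaves of T, defined recursively by d(T₁ ∨ T₂) = (0 if T₁ = |, else d(T₁)) + (1 if T₂ = |, else d(T₂)). Then Ω_T(V,F) = (−i)ⁿ (−1)^{d(T)−1} · ( Π_{j=1}^{n} V(j) ) · Π_{j=1}^{n} ( i F(l(j)) − i F(r(j)+1) + (r(j)−l(j)+1)ε )^{−1}.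 -/

import Mathlib

/-
Splitting a permutation σ ∈ S_T at its minimum gives σ = σ₁ · min · σ₂ with φ(σᵢ) = Tᵢ,
so comparing the blocks from left to right shows that the lexicographically smallest
element of S_{T₁ ∨ T₂} is γ_T = (γ_{T₁} + 1) · 1 · (γ_{T₂} + |T₁| + 1).
In this word the entry 1 at position |T₁| + 1 is a barrier: its own window is the whole
word (l = 1, r = n), and the windows of the positions to its left (right) are those of
γ_{T₁} (of γ_{T₂}, shifted by |T₁| + 1). So the product over j of
−i V(j) / (i F(l j) − i F(r j + 1) + (r j − l j + 1) ε) factors as the product for T₁,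
the root factor −i V(|T₁|+1) / (i F(1) − i F(n+1) + n ε), and the shifted product for T₂,
which is the recursion defining Ω_T up to the sign (−1)^{d(T)−1}.
-/

/-- The minimum of `a :: l` (computed by folding `min`) is a member of `a :: l`. -/
lemma foldr_min_mem (a : ℤ) : ∀ l : List ℤ, l.foldr min a ∈ a :: l := by
  intro l
  induction l with
  | nil => simp
  | cons b l ih =>
    simp only [List.foldr_cons]
    rcases min_choice b (l.foldr min a) with h | h
    · rw [h]; simp
    · rw [h]
      rcases List.mem_cons.mp ih with h' | h'
      · simp [h']
      · simp [h']

/-- The planar binary tree `φ(I)` associated to a list `I` of (distinct) integers: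
`φ` of the empty list is the empty tree `|`, and `φ(I) = φ(I₁) ∨ φ(I₂)` where
`I = I₁ · (min I) · I₂` is the splitting of `I` at its minimal entry. -/
def phi : List ℤ → Tree Unit
  | [] => Tree.nil
  | a :: l =>
    Tree.node ()
      (phi ((a :: l).take ((a :: l).idxOf (l.foldr min a))))
      (phi ((a :: l).drop ((a :: l).idxOf (l.foldr min a) + 1)))
termination_by l => l.length
decreasing_by
  · have hm := foldr_min_mem a l
    have hk := List.idxOf_lt_length_iff.mpr hm
    simp only [List.length_take, List.length_cons, List.foldr_attach] at *
    omega
  · simp only [List.length_drop, List.length_cons]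
    omega

/-- The standardization of a list `I` of distinct integers: the list whose `j`-th entry is
the (1-indexed) position of `I_j` in the increasing ordering of the entries of `I`. -/
def stdz (I : List ℤ) : List ℤ :=
  I.map (fun x => ((I.filter (fun y => y < x)).length : ℤ) + 1)

/-- `l` is (the list of values of) a permutation of `{1, …, n}`. -/
def IsPermList (n : ℕ) (l : List ℤ) : Prop :=
  l.Perm ((List.range n).map (fun k => (k : ℤ) + 1))

/-- `S_T`: the set of permutations `σ ∈ S_{|T|}` (identified with their lists of values
`(σ(1),…,σ(n))`) such that `φ(σ) = T`. -/
def STree (T : Tree Unit) : Set (List ℤ) :=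
  {l | IsPermList T.numNodes l ∧ phi l = T}

/-- The complex number `Ω_T(V,F)` attached to a tree `T` (with `|T| = n`), a family
`V : {1,…,n} → ℂ` of matrix elements and a family `F : {1,…,n+1} → ℝ` of energies,
defined by recursion on `T`: for `T = T₁ ∨ T₂` with `k = |T₁|`,
`Ω_T(V,F) = i·L·V(k+1)·R / (i F(1) − i F(n+1) + nε)` where `L = −1` if `T₁ = |` and
`L = Ω_{T₁}((V(1),…,V(k)), (F(1),…,F(k+1)))` otherwise, and `R = 1` if `T₂ = |` and
`R = Ω_{T₂}((V(k+2),…,V(n)), (F(k+2),…,F(n+1)))` otherwise. (The value on the empty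
tree is irrelevant junk.) -/
noncomputable def OmegaC (ε : ℝ) : Tree Unit → (ℕ → ℂ) → (ℕ → ℝ) → ℂ
  | BinaryTree.nil, _, _ => 1
  | BinaryTree.node _ T₁ T₂, V, F =>
    (Complex.I * (if T₁ = Tree.nil then -1 else OmegaC ε T₁ V F)
        * V (T₁.numNodes + 1)
        * (if T₂ = Tree.nil then 1 else
            OmegaC ε T₂ (fun j => V (j + (T₁.numNodes + 1)))
              (fun j => F (j + (T₁.numNodes + 1))))) /
      (Complex.I * (F 1 : ℂ) - Complex.I * (F (T₁.numNodes + T₂.numNodes + 1 + 1) : ℂ)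
        + ((T₁.numNodes + T₂.numNodes + 1 : ℕ) : ℂ) * (ε : ℂ))

/-- 1-indexed access to the entries of the word `γ` (junk value `0` out of range). -/
def gv (γ : List ℤ) (p : ℕ) : ℤ := γ.getD (p - 1) 0

/-- `l(j) = min { p ≤ j : γ(m) ≥ γ(j) for all m with p ≤ m ≤ j }` (positions are
1-indexed). -/
noncomputable def lfun (γ : List ℤ) (j : ℕ) : ℕ :=
  sInf {p | 1 ≤ p ∧ p ≤ j ∧ ∀ m, p ≤ m → m ≤ j → gv γ j ≤ gv γ m}

/-- `r(j) = max { p ≥ j : γ(m) ≥ γ(j) for all m with j ≤ m ≤ p }` (positions are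
1-indexed, bounded by the length `n` of `γ`). -/
noncomputable def rfun (γ : List ℤ) (j : ℕ) : ℕ :=
  sSup {p | j ≤ p ∧ p ≤ γ.length ∧ ∀ m, j ≤ m → m ≤ p → gv γ j ≤ gv γ m}

/-- The number of right-pointing leaves of a tree. -/
def dT : Tree Unit → ℕ
  | BinaryTree.nil => 0
  | BinaryTree.node _ T₁ T₂ =>
      (if T₁ = Tree.nil then 0 else dT T₁) + (if T₂ = Tree.nil then 1 else dT T₂)

lemma foldr_min_le {α : Type*} [LinearOrder α] (a : α) (l : List α) :
    ∀ x ∈ a :: l, l.foldr min a ≤ x := by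
  induction l <;> simp_all

lemma phi_append_cons {A B : List ℤ} {x : ℤ} (hA : ∀ y ∈ A, x < y)
    (hB : ∀ y ∈ B, x ≤ y) :
    phi (A ++ x :: B) = BinaryTree.node () (phi A) (phi B) := by
  obtain ⟨a, l, hal⟩ : ∃ a l, A ++ x :: B = a :: l := List.exists_cons_of_ne_nil (by simp)
  have hmin : l.foldr min a = x := by
    refine le_antisymm (foldr_min_le a l x (by simp [← hal])) ?_
    have hmem := foldr_min_mem a l
    rw [← hal] at hmem
    simp only [List.mem_append, List.mem_cons] at hmem
    rcases hmem with h | h | h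
    · exact (hA _ h).le
    · exact h.ge
    · exact hB _ h
  have hidx : (A ++ x :: B).idxOf x = A.length := by
    rw [List.idxOf_append_of_notMem fun h => (hA x h).false, List.idxOf_cons_self, add_zero]
  rw [hal, phi, hmin, ← hal, hidx]
  simp [List.drop_append, List.drop_eq_nil_of_le]

lemma exists_eq_append_cons_min {l : List ℤ} (hl : l ≠ []) :
    ∃ A x B, l = A ++ x :: B ∧ (∀ y ∈ A, x < y) ∧ ∀ y ∈ B, x ≤ y := by
  obtain ⟨a, l, rfl⟩ := List.exists_cons_of_ne_nil hl
  have hle := foldr_min_le a l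
  obtain ⟨A, B, hxA, hAB, -⟩ := List.exists_erase_eq (foldr_min_mem a l)
  refine ⟨A, _, B, hAB, fun y hy => ?_, fun y hy => hle y (by simp [hAB, hy])⟩
  exact lt_of_le_of_ne (hle y (by simp [hAB, hy])) fun h => hxA (h ▸ hy)

theorem minSplit_induction {P : List ℤ → Prop} (nil : P [])
    (split : ∀ A x B, (∀ y ∈ A, x < y) → (∀ y ∈ B, x ≤ y) → P A → P B →
      P (A ++ x :: B)) :
    ∀ l, P l
  | [] => nil
  | a :: l => by
    obtain ⟨A, x, B, hl, hA, hB⟩ := exists_eq_append_cons_min (List.cons_ne_nil a l)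
    have hlen := congrArg List.length hl
    rw [hl]
    exact split A x B hA hB (minSplit_induction nil split A) (minSplit_induction nil split B)
termination_by l => l.length
decreasing_by all_goals simp only [List.length_cons, List.length_append] at hlen ⊢; omega

lemma numNodes_phi (l : List ℤ) : BinaryTree.numNodes (phi l) = l.length := by
  induction l using minSplit_induction with
  | nil => simp [phi]
  | split A x B hA hB ihA ihB =>
    simp [phi_append_cons hA hB, BinaryTree.numNodes, ihA, ihB]
    omega

lemma phi_map {f : ℤ → ℤ} (hf : StrictMono f) (l : List ℤ) : phi (l.map f) = phi l := by
  induction l using minSplit_induction with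
  | nil => rfl
  | split A x B hA hB ihA ihB =>
    rw [List.map_append, List.map_cons, phi_append_cons hA hB, phi_append_cons, ihA, ihB]
    · simpa using fun y hy => hf (hA y hy)
    · simpa using fun y hy => hf.monotone (hB y hy)

def gammaT : BinaryTree Unit → List ℤ
  | .nil => []
  | .node _ T₁ T₂ =>
    (gammaT T₁).map (· + 1) ++ 1 :: (gammaT T₂).map (· + ((T₁.numNodes : ℤ) + 1))

lemma length_gammaT (T : BinaryTree Unit) : (gammaT T).length = T.numNodes := by
  induction T with
  | nil => rfl
  | node _ T₁ T₂ ih₁ ih₂ => simp [gammaT, BinaryTree.numNodes, ih₁, ih₂]; omega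

lemma mem_gammaT {T : BinaryTree Unit} {x : ℤ} :
    x ∈ gammaT T ↔ 1 ≤ x ∧ x ≤ T.numNodes := by
  induction T generalizing x with
  | nil => simp [gammaT]; omega
  | node _ T₁ T₂ ih₁ ih₂ =>
    simp only [gammaT, List.mem_append, List.mem_map, List.mem_cons, ih₁, ih₂,
      BinaryTree.numNodes]
    constructor
    · rintro (⟨y, hy, rfl⟩ | rfl | ⟨y, hy, rfl⟩) <;> omega
    · intro hx
      rcases lt_trichotomy x 1 with h | rfl | h
      · omega
      · simp
      · by_cases hk : x ≤ T₁.numNodes + 1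
        · exact Or.inl ⟨x - 1, by omega, by omega⟩
        · exact Or.inr (Or.inr ⟨x - (T₁.numNodes + 1), by push_cast at hx; omega, by omega⟩)

lemma one_le_of_mem_gammaT {T : BinaryTree Unit} {x : ℤ} (hx : x ∈ gammaT T) : 1 ≤ x :=
  (mem_gammaT.1 hx).1

lemma lt_of_mem_map_add_gammaT {T : BinaryTree Unit} {c x : ℤ}
    (hx : x ∈ (gammaT T).map (· + c)) : c < x := by
  obtain ⟨y, hy, rfl⟩ := List.mem_map.1 hx
  have := one_le_of_mem_gammaT hy
  omega

lemma nodup_gammaT (T : BinaryTree Unit) : (gammaT T).Nodup := by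
  induction T with
  | nil => exact List.nodup_nil
  | node _ T₁ T₂ ih₁ ih₂ =>
    rw [gammaT, List.nodup_append, List.nodup_cons]
    refine ⟨ih₁.map (add_left_injective _), ⟨?_, ih₂.map (add_left_injective _)⟩, ?_⟩
    · simp only [List.mem_map, not_exists, not_and]
      intro y hy
      have := one_le_of_mem_gammaT hy
      omega
    · simp only [List.mem_map, List.mem_cons]
      rintro _ ⟨y, hy, rfl⟩ _ (rfl | ⟨z, hz, rfl⟩)
      · have := one_le_of_mem_gammaT hy
        omega
      · have := mem_gammaT.1 hy
        have := one_le_of_mem_gammaT hz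
        omega

lemma phi_gammaT (T : BinaryTree Unit) : phi (gammaT T) = T := by
  induction T with
  | nil => simp [gammaT, phi]
  | node _ T₁ T₂ ih₁ ih₂ =>
    rw [gammaT, phi_append_cons, phi_map add_left_strictMono, phi_map add_left_strictMono,
      ih₁, ih₂]
    · exact fun x hx => lt_of_mem_map_add_gammaT hx
    · exact fun x hx => by have := lt_of_mem_map_add_gammaT hx; omega

lemma isPermList_iff {n : ℕ} {l : List ℤ} :
    IsPermList n l ↔ l.Nodup ∧ ∀ x, x ∈ l ↔ 1 ≤ x ∧ x ≤ n := by
  unfold IsPermList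
  simp only [List.pure_def, List.bind_eq_flatMap, ← List.map_eq_flatMap, List.map_map]
  have hR : ((List.range n).map ((· + 1) ∘ ((↑) : ℕ → ℤ))).Nodup :=
    List.nodup_range.map fun a b h => by simpa using h
  have hmem : ∀ x : ℤ,
      x ∈ (List.range n).map ((· + 1) ∘ ((↑) : ℕ → ℤ)) ↔ 1 ≤ x ∧ x ≤ n := by
    intro x
    simp only [List.mem_map, List.mem_range, Function.comp_apply]
    exact ⟨fun ⟨a, ha, h⟩ => by omega, fun h => ⟨(x - 1).toNat, by omega, by omega⟩⟩
  refine ⟨fun h => ⟨h.nodup_iff.2 hR, fun x => h.mem_iff.trans (hmem x)⟩,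
    fun ⟨hl, hl'⟩ => ?_⟩
  exact (List.perm_ext_iff_of_nodup hl hR).2 fun x => (hl' x).trans (hmem x).symm

lemma gammaT_mem_STree (T : BinaryTree Unit) : gammaT T ∈ STree T :=
  ⟨isPermList_iff.2 ⟨nodup_gammaT T, fun _ => mem_gammaT⟩, phi_gammaT T⟩

lemma List.Lex.append_of_length_eq {α : Type*} {r : α → α → Prop} {x y : List α}
    (h : List.Lex r x y) (hlen : x.length = y.length) (u v : List α) :
    List.Lex r (x ++ u) (y ++ v) := by
  induction h with
  | nil => simp at hlen
  | cons _ ih => exact .cons (ih (by simpa using hlen))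
  | rel h => exact .rel h

lemma List.append_le_append_of_length_eq {α : Type*} [LinearOrder α] {x y u v : List α}
    (hlen : x.length = y.length) (hxy : x ≤ y) (huv : x = y → u ≤ v) : x ++ u ≤ y ++ v := by
  rcases hxy.lt_or_eq with hlt | rfl
  · exact le_of_lt (List.Lex.append_of_length_eq hlt hlen u v)
  rcases (huv rfl).lt_or_eq with hlt | rfl
  · exact le_of_lt (List.Lex.append_left _ hlt x)
  · exact le_rfl

lemma gammaT_map_add_le {T : BinaryTree Unit} {b : ℤ} {A : List ℤ} (hA : A.Nodup)
    (hb : ∀ x ∈ A, b < x) (hT : phi A = T) : (gammaT T).map (· + b) ≤ A := by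
  induction T generalizing b A with
  | nil =>
    obtain rfl : A = [] := List.eq_nil_of_length_eq_zero (by rw [← numNodes_phi, hT]; rfl)
    exact le_rfl
  | node _ T₁ T₂ ih₁ ih₂ =>
    have hne : A ≠ [] := by rintro rfl; simp [phi] at hT
    obtain ⟨A₁, x, A₂, rfl, h₁, h₂⟩ := exists_eq_append_cons_min hne
    rw [phi_append_cons h₁ h₂, BinaryTree.node.injEq] at hT
    obtain ⟨-, rfl, rfl⟩ := hT
    obtain ⟨hA₁, hxA₂, hdisj⟩ := List.nodup_append.1 hA
    obtain ⟨hx, hA₂⟩ := List.nodup_cons.1 hxA₂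
    have hbx : b < x := hb x (by simp)
    have hgamma : (gammaT (BinaryTree.node () (phi A₁) (phi A₂))).map (· + b) =
        (gammaT (phi A₁)).map (· + (b + 1)) ++
          (b + 1) :: (gammaT (phi A₂)).map (· + (b + 1 + A₁.length)) := by
      simp only [gammaT, numNodes_phi, List.map_append, List.map_cons, List.map_map,
        Function.comp_def]
      exact congrArg₂ (· ++ ·) (List.map_congr_left fun _ _ => by ring)
        (congrArg₂ List.cons (by ring) (List.map_congr_left fun _ _ => by ring))
    rw [hgamma]
    refine List.append_le_append_of_length_eq (by simp [length_gammaT, numNodes_phi])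
      (ih₁ hA₁ (fun y hy => by have := h₁ y hy; omega) rfl) fun hA₁_eq => ?_
    rcases (show b + 1 ≤ x by omega).lt_or_eq with hlt | rfl
    · exact le_of_lt (List.Lex.rel hlt)
    refine List.cons_le_cons _ (ih₂ hA₂ (fun y hy => ?_) rfl)
    have hyA₁ : y ∉ A₁ := fun h => hdisj y h y (by simp [hy]) rfl
    rw [← hA₁_eq, List.mem_map] at hyA₁
    -- `A₁` is the shifted `γ_{T₁}`: it fills `b+2, …, b+|T₁|+1`, so `A₂` lies above it.
    have hxy : b + 1 < y := lt_of_le_of_ne (h₂ y hy) fun h => hx (h ▸ hy)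
    by_contra hyb
    refine hyA₁ ⟨y - (b + 1), mem_gammaT.2 ⟨by omega, ?_⟩, by ring⟩
    rw [numNodes_phi]
    omega

lemma isLeast_STree_gammaT (T : BinaryTree Unit) : IsLeast (STree T) (gammaT T) := by
  refine ⟨gammaT_mem_STree T, fun τ hτ => ?_⟩
  obtain ⟨hnd, hmem⟩ := isPermList_iff.1 hτ.1
  simpa using gammaT_map_add_le (b := 0) hnd (fun x hx => by have := (hmem x).1 hx; omega) hτ.2

lemma Nat.sInf_image_add {S : Set ℕ} (hS : S.Nonempty) (n : ℕ) :
    sInf ((· + n) '' S) = sInf S + n :=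
  (Monotone.map_isLeast (fun _ _ h => Nat.add_le_add_right h n) (isLeast_csInf hS)).csInf_eq

lemma Nat.sSup_image_add {S : Set ℕ} (hS : S.Nonempty) (hS' : BddAbove S) (n : ℕ) :
    sSup ((· + n) '' S) = sSup S + n :=
  (Monotone.map_isGreatest (fun _ _ h => Nat.add_le_add_right h n)
    ⟨Nat.sSup_mem hS hS', fun _ hp => le_csSup hS' hp⟩).csSup_eq

section Window

variable {γ γ' u v : List ℤ} {c : ℤ} {j : ℕ}

lemma gv_mem {p : ℕ} (hp : 1 ≤ p) (hpγ : p ≤ γ.length) : gv γ p ∈ γ := by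
  rw [gv, List.getD_eq_getElem _ _ (by omega)]
  exact List.getElem_mem _

lemma gv_map {f : ℤ → ℤ} {p : ℕ} (hp : 1 ≤ p) (hpγ : p ≤ γ.length) :
    gv (γ.map f) p = f (gv γ p) := by
  simp only [gv, List.getD_eq_getElem?_getD, List.getElem?_map]
  rw [List.getElem?_eq_getElem (by omega)]
  rfl

lemma gv_append_of_le {p : ℕ} (hp : 1 ≤ p) (hpu : p ≤ u.length) : gv (u ++ v) p = gv u p :=
  List.getD_append _ _ _ _ (by omega)

lemma gv_append_cons_length : gv (u ++ c :: v) (u.length + 1) = c := by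
  simp [gv]

lemma gv_append_cons_add {p : ℕ} (hp : 1 ≤ p) :
    gv (u ++ c :: v) (p + (u.length + 1)) = gv v p := by
  rw [gv, List.getD_append_right _ _ _ _ (by omega)]
  obtain ⟨q, rfl⟩ := Nat.exists_eq_add_of_le' hp
  simp [gv]


def lfunSet (γ : List ℤ) (j : ℕ) : Set ℕ :=
  {p | 1 ≤ p ∧ p ≤ j ∧ ∀ m, p ≤ m → m ≤ j → gv γ j ≤ gv γ m}

def rfunSet (γ : List ℤ) (j : ℕ) : Set ℕ :=
  {p | j ≤ p ∧ p ≤ γ.length ∧ ∀ m, j ≤ m → m ≤ p → gv γ j ≤ gv γ m}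

lemma lfun_eq_sInf : lfun γ j = sInf (lfunSet γ j) := rfl

lemma rfun_eq_sSup : rfun γ j = sSup (rfunSet γ j) := rfl

lemma lfunSet_congr
    (h : ∀ m, 1 ≤ m → m ≤ j → (gv γ j ≤ gv γ m ↔ gv γ' j ≤ gv γ' m)) :
    lfunSet γ j = lfunSet γ' j := by
  ext p
  exact and_congr_right fun hp => and_congr_right fun _ =>
    forall_congr' fun m => imp_congr_right fun hpm => forall_congr' fun hmj =>
      h m (hp.trans hpm) hmj

lemma rfunSet_congr (hlen : γ.length = γ'.length)
    (h : ∀ m, j ≤ m → m ≤ γ.length → (gv γ j ≤ gv γ m ↔ gv γ' j ≤ gv γ' m)) :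
    rfunSet γ j = rfunSet γ' j := by
  ext p
  rw [rfunSet, rfunSet, Set.mem_ofPred_eq, Set.mem_ofPred_eq, ← hlen]
  exact and_congr_right fun hjp => and_congr_right fun hp =>
    forall_congr' fun m => forall_congr' fun hjm => imp_congr_right fun hmp =>
      h m hjm (hmp.trans hp)

lemma lfun_map {f : ℤ → ℤ} (hf : StrictMono f) (hj : 1 ≤ j) (hjγ : j ≤ γ.length) :
    lfun (γ.map f) j = lfun γ j := by
  rw [lfun_eq_sInf, lfun_eq_sInf, lfunSet_congr fun m hm hmj => ?_]
  rw [gv_map hj hjγ, gv_map hm (hmj.trans hjγ), hf.le_iff_le]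

lemma rfun_map {f : ℤ → ℤ} (hf : StrictMono f) (hj : 1 ≤ j) :
    rfun (γ.map f) j = rfun γ j := by
  rw [rfun_eq_sSup, rfun_eq_sSup, rfunSet_congr (List.length_map _) fun m hjm hm => ?_]
  rw [List.length_map] at hm
  rw [gv_map hj (hjm.trans hm), gv_map (hj.trans hjm) hm, hf.le_iff_le]

lemma lfun_append_of_le (hju : j ≤ u.length) : lfun (u ++ v) j = lfun u j := by
  rw [lfun_eq_sInf, lfun_eq_sInf, lfunSet_congr fun m hm hmj => ?_]
  rw [gv_append_of_le (hm.trans hmj) hju, gv_append_of_le hm (hmj.trans hju)]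

lemma rfun_append_cons_of_le (hj : 1 ≤ j) (hju : j ≤ u.length) (hc : c < gv u j) :
    rfun (u ++ c :: v) j = rfun u j := by
  rw [rfun_eq_sSup, rfun_eq_sSup]
  congr 1
  ext p
  simp only [rfunSet, Set.mem_ofPred_eq, List.length_append, List.length_cons]
  refine ⟨fun ⟨hjp, _, h⟩ => ?_,
    fun ⟨hjp, hp, h⟩ => ⟨hjp, by omega, fun m hjm hmp => ?_⟩⟩
  · have hpu : p ≤ u.length := by
      by_contra hpu
      have := h (u.length + 1) (by omega) (by omega)
      rw [gv_append_of_le hj hju, gv_append_cons_length] at this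
      omega
    refine ⟨hjp, hpu, fun m hjm hmp => ?_⟩
    have := h m hjm hmp
    rwa [gv_append_of_le hj hju, gv_append_of_le (hj.trans hjm) (hmp.trans hpu)] at this
  · rw [gv_append_of_le hj hju, gv_append_of_le (hj.trans hjm) (hmp.trans hp)]
    exact h m hjm hmp

lemma lfun_append_cons_length (hu : ∀ x ∈ u, c ≤ x) :
    lfun (u ++ c :: v) (u.length + 1) = 1 := by
  refine IsLeast.csInf_eq ⟨⟨le_rfl, by omega, fun m hm hmu => ?_⟩, fun p hp => hp.1⟩
  rw [gv_append_cons_length]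
  rcases hmu.lt_or_eq with hmu | rfl
  · rw [gv_append_of_le hm (by omega)]
    exact hu _ (gv_mem hm (by omega))
  · rw [gv_append_cons_length]

lemma rfun_append_cons_length (hv : ∀ x ∈ v, c ≤ x) :
    rfun (u ++ c :: v) (u.length + 1) = u.length + v.length + 1 := by
  refine IsGreatest.csSup_eq ⟨⟨by omega, by simp, fun m hm hmv => ?_⟩,
    fun p hp => by simpa [add_assoc, add_comm 1] using hp.2.1⟩
  rw [gv_append_cons_length]
  rcases hm.lt_or_eq with hm | rfl
  · obtain ⟨q, rfl⟩ : ∃ q, m = q + (u.length + 1) := ⟨m - (u.length + 1), by omega⟩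
    rw [gv_append_cons_add (by omega)]
    exact hv _ (gv_mem (by omega) (by omega))
  · rw [gv_append_cons_length]

lemma lfunSet_append_cons_add (hj : 1 ≤ j) (hc : c < gv v j) :
    lfunSet (u ++ c :: v) (j + (u.length + 1)) = (· + (u.length + 1)) '' lfunSet v j := by
  ext p
  simp only [lfunSet, Set.mem_ofPred_eq, Set.mem_image]
  constructor
  · rintro ⟨-, hpj, h⟩
    have hup : u.length + 1 < p := by
      by_contra hup
      have := h (u.length + 1) (by omega) (by omega)
      rw [gv_append_cons_add hj, gv_append_cons_length] at this
      omega
    refine ⟨p - (u.length + 1), ⟨by omega, by omega, fun m hm hmj => ?_⟩, by omega⟩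
    have := h (m + (u.length + 1)) (by omega) (by omega)
    rwa [gv_append_cons_add hj, gv_append_cons_add (by omega)] at this
  · rintro ⟨q, ⟨hq, hqj, h⟩, rfl⟩
    refine ⟨by omega, by omega, fun m hm hmj => ?_⟩
    obtain ⟨m, rfl⟩ : ∃ m', m = m' + (u.length + 1) := ⟨m - (u.length + 1), by omega⟩
    rw [gv_append_cons_add hj, gv_append_cons_add (by omega)]
    exact h m (by omega) (by omega)

lemma rfunSet_append_cons_add (hj : 1 ≤ j) :
    rfunSet (u ++ c :: v) (j + (u.length + 1)) = (· + (u.length + 1)) '' rfunSet v j := by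
  ext p
  simp only [rfunSet, Set.mem_ofPred_eq, Set.mem_image, List.length_append, List.length_cons]
  constructor
  · rintro ⟨hjp, hp, h⟩
    refine ⟨p - (u.length + 1), ⟨by omega, by omega, fun m hjm hmp => ?_⟩, by omega⟩
    have := h (m + (u.length + 1)) (by omega) (by omega)
    rwa [gv_append_cons_add hj, gv_append_cons_add (by omega)] at this
  · rintro ⟨q, ⟨hjq, hq, h⟩, rfl⟩
    refine ⟨by omega, by omega, fun m hjm hmq => ?_⟩
    obtain ⟨m, rfl⟩ : ∃ m', m = m' + (u.length + 1) := ⟨m - (u.length + 1), by omega⟩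
    rw [gv_append_cons_add hj, gv_append_cons_add (by omega)]
    exact h m (by omega) (by omega)

lemma lfun_append_cons_add (hj : 1 ≤ j) (hc : c < gv v j) :
    lfun (u ++ c :: v) (j + (u.length + 1)) = lfun v j + (u.length + 1) := by
  rw [lfun_eq_sInf, lfunSet_append_cons_add hj hc, Nat.sInf_image_add]
  · rfl
  · exact ⟨j, hj, le_rfl, fun m hjm hmj => by rw [le_antisymm hmj hjm]⟩

lemma rfun_append_cons_add (hj : 1 ≤ j) (hjv : j ≤ v.length) :
    rfun (u ++ c :: v) (j + (u.length + 1)) = rfun v j + (u.length + 1) := by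
  rw [rfun_eq_sSup, rfunSet_append_cons_add hj, Nat.sSup_image_add]
  · rfl
  · exact ⟨j, le_rfl, hjv, fun m hjm hmj => by rw [le_antisymm hmj hjm]⟩
  · exact ⟨v.length, fun p hp => hp.2.1⟩

end Window

section GammaNode

variable {T₁ T₂ : BinaryTree Unit} {j : ℕ}

lemma lfun_gammaT_node_of_le (hj : 1 ≤ j) (hjk : j ≤ T₁.numNodes) :
    lfun (gammaT (.node () T₁ T₂)) j = lfun (gammaT T₁) j := by
  rw [gammaT, lfun_append_of_le (by simpa [length_gammaT]),
    lfun_map add_left_strictMono hj (by rwa [length_gammaT])]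

lemma rfun_gammaT_node_of_le (hj : 1 ≤ j) (hjk : j ≤ T₁.numNodes) :
    rfun (gammaT (.node () T₁ T₂)) j = rfun (gammaT T₁) j := by
  have hjγ : j ≤ (gammaT T₁).length := by rwa [length_gammaT]
  have hgv := one_le_of_mem_gammaT (gv_mem hj hjγ)
  rw [gammaT, rfun_append_cons_of_le hj (by simpa using hjγ) (by rw [gv_map hj hjγ]; omega),
    rfun_map add_left_strictMono hj]

lemma lfun_gammaT_node_root : lfun (gammaT (.node () T₁ T₂)) (T₁.numNodes + 1) = 1 := by
  have := lfun_append_cons_length (c := 1) (u := (gammaT T₁).map (· + 1))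
    (v := (gammaT T₂).map (· + ((T₁.numNodes : ℤ) + 1)))
    fun x hx => by have := lt_of_mem_map_add_gammaT hx; omega
  rwa [List.length_map, length_gammaT] at this

lemma rfun_gammaT_node_root :
    rfun (gammaT (.node () T₁ T₂)) (T₁.numNodes + 1) = T₁.numNodes + T₂.numNodes + 1 := by
  have := rfun_append_cons_length (c := 1) (u := (gammaT T₁).map (· + 1))
    (v := (gammaT T₂).map (· + ((T₁.numNodes : ℤ) + 1)))
    fun x hx => by have := lt_of_mem_map_add_gammaT hx; omega
  rwa [List.length_map, List.length_map, length_gammaT, length_gammaT] at this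

lemma lfun_gammaT_node_add (hj : 1 ≤ j) (hjm : j ≤ T₂.numNodes) :
    lfun (gammaT (.node () T₁ T₂)) (j + (T₁.numNodes + 1)) =
      lfun (gammaT T₂) j + (T₁.numNodes + 1) := by
  have hjγ : j ≤ (gammaT T₂).length := by rwa [length_gammaT]
  have hgv := one_le_of_mem_gammaT (gv_mem hj hjγ)
  have := lfun_append_cons_add (c := 1) (u := (gammaT T₁).map (· + 1))
    (v := (gammaT T₂).map (· + ((T₁.numNodes : ℤ) + 1))) hj (by rw [gv_map hj hjγ]; omega)
  rwa [List.length_map, length_gammaT, lfun_map add_left_strictMono hj hjγ] at this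

lemma rfun_gammaT_node_add (hj : 1 ≤ j) (hjm : j ≤ T₂.numNodes) :
    rfun (gammaT (.node () T₁ T₂)) (j + (T₁.numNodes + 1)) =
      rfun (gammaT T₂) j + (T₁.numNodes + 1) := by
  have := rfun_append_cons_add (c := 1) (u := (gammaT T₁).map (· + 1))
    (v := (gammaT T₂).map (· + ((T₁.numNodes : ℤ) + 1))) hj (by simpa [length_gammaT])
  rwa [List.length_map, length_gammaT, rfun_map add_left_strictMono hj] at this

end GammaNode

lemma Finset.prod_Icc_one_split {M : Type*} [CommMonoid M] (f : ℕ → M) (k m : ℕ) :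
    ∏ j ∈ Icc 1 (k + m + 1), f j =
      (∏ j ∈ Icc 1 k, f j) * f (k + 1) * ∏ j ∈ Icc 1 m, f (j + (k + 1)) := by
  induction m with
  | zero => simpa using prod_Icc_succ_top (Nat.le_add_left 1 k) f
  | succ m ih =>
    rw [show k + (m + 1) + 1 = k + m + 1 + 1 by omega, prod_Icc_succ_top (by omega), ih,
      prod_Icc_succ_top (by omega), show m + 1 + (k + 1) = k + m + 1 + 1 by omega, mul_assoc]

noncomputable def omegaFactor (ε : ℝ) (γ : List ℤ) (V : ℕ → ℂ) (F : ℕ → ℝ) (j : ℕ) :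
    ℂ :=
  -Complex.I * V j * (Complex.I * (F (lfun γ j) : ℂ) - Complex.I * (F (rfun γ j + 1) : ℂ)
    + ((rfun γ j - lfun γ j + 1 : ℕ) : ℂ) * (ε : ℂ))⁻¹

lemma omegaFactor_add {ε : ℝ} {γ γ' : List ℤ} {V : ℕ → ℂ} {F : ℕ → ℝ} {j c : ℕ}
    (hl : lfun γ (j + c) = lfun γ' j + c) (hr : rfun γ (j + c) = rfun γ' j + c) :
    omegaFactor ε γ V F (j + c) =
      omegaFactor ε γ' (fun i => V (i + c)) (fun i => F (i + c)) j := by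
  rw [omegaFactor, omegaFactor, hl, hr, add_right_comm _ c 1,
    show rfun γ' j + c - (lfun γ' j + c) = rfun γ' j - lfun γ' j by omega]

lemma prod_omegaFactor_gammaT_node (ε : ℝ) (T₁ T₂ : BinaryTree Unit) (V : ℕ → ℂ)
    (F : ℕ → ℝ) :
    ∏ j ∈ Finset.Icc 1 (BinaryTree.node () T₁ T₂).numNodes,
        omegaFactor ε (gammaT (.node () T₁ T₂)) V F j =
      (∏ j ∈ Finset.Icc 1 T₁.numNodes, omegaFactor ε (gammaT T₁) V F j)
        * (-Complex.I * V (T₁.numNodes + 1)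
          * (Complex.I * (F 1 : ℂ) - Complex.I * (F (T₁.numNodes + T₂.numNodes + 1 + 1) : ℂ)
            + ((T₁.numNodes + T₂.numNodes + 1 : ℕ) : ℂ) * (ε : ℂ))⁻¹)
        * ∏ j ∈ Finset.Icc 1 T₂.numNodes, omegaFactor ε (gammaT T₂)
            (fun i => V (i + (T₁.numNodes + 1))) (fun i => F (i + (T₁.numNodes + 1))) j := by
  rw [BinaryTree.numNodes, Finset.prod_Icc_one_split]
  refine congrArg₂ (· * ·) (congrArg₂ (· * ·) ?_ ?_) ?_
  · refine Finset.prod_congr rfl fun j hj => ?_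
    rw [Finset.mem_Icc] at hj
    rw [omegaFactor, omegaFactor, lfun_gammaT_node_of_le hj.1 hj.2,
      rfun_gammaT_node_of_le hj.1 hj.2]
  · rw [omegaFactor, lfun_gammaT_node_root, rfun_gammaT_node_root, Nat.add_sub_cancel]
  · refine Finset.prod_congr rfl fun j hj => ?_
    rw [Finset.mem_Icc] at hj
    exact omegaFactor_add (lfun_gammaT_node_add hj.1 hj.2) (rfun_gammaT_node_add hj.1 hj.2)

lemma dT_pos {T : BinaryTree Unit} (hT : T ≠ .nil) : 1 ≤ dT T := by
  induction T with
  | nil => exact absurd rfl hT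
  | node _ T₁ T₂ _ ih₂ =>
    rw [dT]
    by_cases h₂ : T₂ = .nil
    · rw [if_pos h₂]
      omega
    · rw [if_neg h₂]
      have := ih₂ h₂
      omega

theorem OmegaC_eq_prod_omegaFactor (ε : ℝ) (T : BinaryTree Unit) (V : ℕ → ℂ)
    (F : ℕ → ℝ) :
    OmegaC ε T V F =
      (-1) ^ (dT T - 1) * ∏ j ∈ Finset.Icc 1 T.numNodes, omegaFactor ε (gammaT T) V F j := by
  induction T generalizing V F with
  | nil => simp [OmegaC, dT]
  | node u T₁ T₂ ih₁ ih₂ =>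
    cases u
    -- The leaf values `L = -1` and `R = 1` fit the formula for the empty tree once the leaf's
    -- contribution to `dT` is taken into account.
    have hL : (if T₁ = .nil then -1 else OmegaC ε T₁ V F) =
        -(-1) ^ (if T₁ = .nil then 0 else dT T₁) *
          ∏ j ∈ Finset.Icc 1 T₁.numNodes, omegaFactor ε (gammaT T₁) V F j := by
      split_ifs with h
      · subst h
        simp
      · obtain ⟨d, hd⟩ := Nat.exists_eq_add_of_le' (dT_pos h)
        rw [ih₁, hd, Nat.add_sub_cancel, pow_succ]
        ring
    have hR : ∀ V F, (if T₂ = .nil then 1 else OmegaC ε T₂ V F) =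
        (-1) ^ ((if T₂ = .nil then 1 else dT T₂) - 1) *
          ∏ j ∈ Finset.Icc 1 T₂.numNodes, omegaFactor ε (gammaT T₂) V F j := by
      intro V F
      split_ifs with h
      · subst h
        simp
      · exact ih₂ V F
    obtain ⟨e, he⟩ : ∃ e, (if T₂ = .nil then 1 else dT T₂) = e + 1 := by
      split_ifs with h
      exacts [⟨0, rfl⟩, Nat.exists_eq_add_of_le' (dT_pos h)]
    rw [OmegaC, hL, hR, prod_omegaFactor_gammaT_node, dT, he]
    simp only [Nat.add_sub_cancel, ← Nat.add_assoc, pow_add]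
    ring

theorem OmegaC_eq_general (ε : ℝ) (T : Tree Unit)
    (V : ℕ → ℂ) (F : ℕ → ℝ) (γ : List ℤ)
    (hγ : γ ∈ STree T) (hmin : ∀ τ ∈ STree T, γ ≤ τ) :
    OmegaC ε T V F =
      (-Complex.I) ^ T.numNodes * (-1) ^ (dT T - 1)
        * (∏ j ∈ Finset.Icc 1 T.numNodes, V j)
        * ∏ j ∈ Finset.Icc 1 T.numNodes,
            (Complex.I * (F (lfun γ j) : ℂ) - Complex.I * (F (rfun γ j + 1) : ℂ)
              + ((rfun γ j - lfun γ j + 1 : ℕ) : ℂ) * (ε : ℂ))⁻¹ := by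
  obtain rfl := (isLeast_STree_gammaT T).unique ⟨hγ, hmin⟩
  rw [OmegaC_eq_prod_omegaFactor]
  simp only [omegaFactor, Finset.prod_mul_distrib, Finset.prod_const, Nat.card_Icc,
    Nat.add_sub_cancel]
  ring

/-- Explicit non-recursive formula for `Ω_T(V,F)`: with `γ = γ_T` the lexicographically
smallest element of `S_T` and `l, r` as above,
`Ω_T(V,F) = (−i)ⁿ (−1)^{d−1} (Π_j V(j)) Π_j (i F(l(j)) − i F(r(j)+1) + (r(j)−l(j)+1)ε)⁻¹`,
where `d` is the number of right-pointing leaves of `T`. -/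
theorem OmegaC_eq (ε : ℝ) (hε : 0 < ε) (T : Tree Unit) (hT : 1 ≤ T.numNodes)
    (V : ℕ → ℂ) (F : ℕ → ℝ) (γ : List ℤ)
    (hγ : γ ∈ STree T) (hmin : ∀ τ ∈ STree T, γ ≤ τ) :
    OmegaC ε T V F =
      (-Complex.I) ^ T.numNodes * (-1) ^ (dT T - 1)
        * (∏ j ∈ Finset.Icc 1 T.numNodes, V j)
        * ∏ j ∈ Finset.Icc 1 T.numNodes,
            (Complex.I * (F (lfun γ j) : ℂ) - Complex.I * (F (rfun γ j + 1) : ℂ)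
              + ((rfun γ j - lfun γ j + 1 : ℕ) : ℂ) * (ε : ℂ))⁻¹ :=
  OmegaC_eq_general ε T V F γ hγ hmin
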